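/- arXiv:1706.09460 — 3 statements merged into one kernel-verified Lean document; each statement's English description precedes it below -/
import Mathlib

section
/- Let F : (0,∞) → ℝ satisfy conditions (F2) and (F3) with constant k ∈ (0,1), let τ > 0, and let (γ_n)_{n≥0} be a sequence of positive real numbers satisfying F(γ_n) ≤ F(γ_0) − nτ for all n ≥ 1. Then lim_{n→∞} γ_n = 0, lim_{n→∞} n·γ_n^k = 0, and there exists n₁ ∈ ℕ such that γ_n ≤ 1/n^{1/k} for all n ≥ n₁. -/
open Filter Set

/-- If `F` satisfies (F2) and (F3) with constant `k ∈ (0,1)`, `τ > 0`,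
and `(γₙ)` is a sequence of positive reals with `F (γ n) ≤ F (γ 0) - n·τ` for all `n ≥ 1`,
then `γ n → 0`, `n · (γ n)^k → 0`, and `γ n ≤ 1 / n^(1/k)` for all sufficiently large `n`. -/
theorem gamma_tendsto_zero_of_F_decay
    (F : ℝ → ℝ) (k : ℝ) (hk : k ∈ Set.Ioo (0:ℝ) 1)
    -- (F2)
    (hF2 : ∀ α : ℕ → ℝ, (∀ n, 0 < α n) →
      (Tendsto α atTop (nhds 0) ↔ Tendsto (fun n => F (α n)) atTop atBot))
    -- (F3) with constant k
    (hF3 : Tendsto (fun α : ℝ => α ^ k * F α) (nhdsWithin 0 (Set.Ioi 0)) (nhds 0))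
    (τ : ℝ) (hτ : 0 < τ)
    (γ : ℕ → ℝ) (hγ_pos : ∀ n, 0 < γ n)
    (hdecay : ∀ n : ℕ, 1 ≤ n → F (γ n) ≤ F (γ 0) - n * τ) :
    Tendsto γ atTop (nhds 0) ∧
    Tendsto (fun n : ℕ => (n : ℝ) * (γ n) ^ k) atTop (nhds 0) ∧
    ∃ n₁ : ℕ, ∀ n : ℕ, n₁ ≤ n → γ n ≤ 1 / (n : ℝ) ^ (1 / k) := by
  have hk0 := hk.1
  -- RHS tends to -∞
  have hrhs : Tendsto (fun n : ℕ => F (γ 0) - n * τ) atTop atBot := by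
    have h1 : Tendsto (fun n : ℕ => (n : ℝ) * τ) atTop atTop :=
      tendsto_natCast_atTop_atTop.atTop_mul_const hτ
    simpa [sub_eq_add_neg] using tendsto_atBot_add_const_left atTop (F (γ 0)) (tendsto_neg_atTop_atBot.comp h1)
  have hFγ : Tendsto (fun n => F (γ n)) atTop atBot := by
    apply tendsto_atBot_mono' atTop _ hrhs
    filter_upwards [eventually_ge_atTop 1] with n hn using hdecay n hn
  have hγ0 : Tendsto γ atTop (nhds 0) := (hF2 γ hγ_pos).mpr hFγ
  -- step 2
  have hγin : Tendsto γ atTop (nhdsWithin 0 (Set.Ioi 0)) :=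
    tendsto_nhdsWithin_of_tendsto_nhds_of_eventually_within γ hγ0
      (Eventually.of_forall hγ_pos)
  have h2 : Tendsto (fun n => (γ n) ^ k * F (γ n)) atTop (nhds 0) := hF3.comp hγin
  have h3 : Tendsto (fun n => (γ n) ^ k) atTop (nhds 0) := by
    have := hγ0.rpow_const (Or.inr hk0.le)
    simpa [Real.zero_rpow (ne_of_gt hk0)] using this
  have h4 : Tendsto (fun n => (γ n) ^ k * F (γ 0) - (γ n) ^ k * F (γ n))
      atTop (nhds 0) := by
    simpa using (h3.mul_const (F (γ 0))).sub h2
  have hsq : Tendsto (fun n : ℕ => τ * ((n : ℝ) * (γ n) ^ k)) atTop (nhds 0) := by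
    apply squeeze_zero' (g := fun n => (γ n) ^ k * F (γ 0) - (γ n) ^ k * F (γ n))
    · filter_upwards with n
      have := hγ_pos n
      positivity
    · filter_upwards [eventually_ge_atTop 1] with n hn
      have h := hdecay n hn
      have hb : (0:ℝ) ≤ (γ n) ^ k := (Real.rpow_pos_of_pos (hγ_pos n) k).le
      have : (n : ℝ) * τ ≤ F (γ 0) - F (γ n) := by linarith
      have := mul_le_mul_of_nonneg_left this hb
      nlinarith
    · exact h4
  have hg : Tendsto (fun n : ℕ => (n : ℝ) * (γ n) ^ k) atTop (nhds 0) := by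
    have := hsq.const_mul τ⁻¹
    simpa [mul_assoc, inv_mul_cancel_left₀ hτ.ne'] using this
  refine ⟨hγ0, hg, ?_⟩
  -- step 3
  have hev : ∀ᶠ n : ℕ in atTop, (n : ℝ) * (γ n) ^ k ≤ 1 :=
    hg.eventually (eventually_le_nhds one_pos)
  obtain ⟨N, hN⟩ := (hev.and (eventually_ge_atTop 1)).exists_forall_of_atTop
  refine ⟨N, fun n hn => ?_⟩
  obtain ⟨h1, h2'⟩ := hN n hn
  have hnpos : (0:ℝ) < n := by exact_mod_cast h2'
  have hle : (γ n) ^ k ≤ 1 / n := by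
    rw [le_div_iff₀ hnpos]; linarith [h1, mul_comm (n:ℝ) ((γ n)^k)]
  have := Real.rpow_le_rpow (Real.rpow_pos_of_pos (hγ_pos n) k).le hle
    (by positivity : (0:ℝ) ≤ 1/k)
  rwa [← Real.rpow_mul (hγ_pos n).le, mul_one_div_cancel hk0.ne', Real.rpow_one,
    Real.div_rpow zero_le_one hnpos.le, Real.one_rpow] at this
end

section
/- Let F : (0,∞) → ℝ satisfy conditions (F2) and (F3) with constant k ∈ (0,1), let τ > 0, and let (γ_n)_{n≥0} be a sequence of positive real numbers satisfying F(γ_n) ≤ F(γ_0) − nτ for all n ≥ 1. Then the series Σ_{n=0}^∞ γ_n converges. -/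
/-!
Since `F (γ n) ≤ F (γ 0) - n τ → -∞`, (F2) forces `γ n → 0⁺`, and then (F3) gives
`n τ γₙ^k ≤ γₙ^k (F (γ 0) - F (γ n)) → 0`. Hence `n γₙ^k ≤ 1` eventually, i.e.
`γₙ ≤ n^(-1/k)`, and `1/k > 1` makes the comparison series converge.
-/

open Filter Set Topology

theorem tendsto_atBot_of_le_const_sub_natCast_mul {u : ℕ → ℝ} {c τ : ℝ} (hτ : 0 < τ)
    (h : ∀ᶠ n in atTop, u n ≤ c - n * τ) : Tendsto u atTop atBot := by
  refine tendsto_atBot_mono' atTop h (tendsto_atBot_add_const_left _ c ?_)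
  exact tendsto_neg_atBot_iff.mpr (tendsto_natCast_atTop_atTop.atTop_mul_const hτ)

theorem tendsto_natCast_mul_rpow_of_le_const_sub_natCast_mul {F : ℝ → ℝ} {k c τ : ℝ}
    (hk : 0 < k) (hτ : 0 < τ)
    (hF : Tendsto (fun α : ℝ => α ^ k * F α) (𝓝[>] 0) (𝓝 0))
    {x : ℕ → ℝ} (hx : Tendsto x atTop (𝓝[>] 0)) (hdecay : ∀ᶠ n in atTop, F (x n) ≤ c - n * τ) :
    Tendsto (fun n : ℕ => n * x n ^ k) atTop (𝓝 0) := by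
  have hx_pos : ∀ᶠ n in atTop, 0 < x n := hx.eventually self_mem_nhdsWithin
  have hxk : Tendsto (fun n => x n ^ k) atTop (𝓝 0) := by
    simpa [Real.zero_rpow hk.ne', Function.comp_def] using
      (Real.continuousAt_rpow_const 0 k (Or.inr hk.le)).tendsto.comp
        (tendsto_nhdsWithin_iff.mp hx).1
  have hgap : Tendsto (fun n => (x n ^ k * c - x n ^ k * F (x n)) / τ) atTop (𝓝 0) := by
    simpa using ((hxk.mul_const c).sub (hF.comp hx)).div_const τ
  refine squeeze_zero' ?_ ?_ hgap
  · filter_upwards [hx_pos] with n hn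
    positivity
  · filter_upwards [hx_pos, hdecay] with n hn hFn
    rw [le_div_iff₀ hτ]
    nlinarith [mul_le_mul_of_nonneg_left hFn (Real.rpow_pos_of_pos hn k).le]

theorem le_inv_natCast_rpow_inv_of_mul_rpow_le_one {x k : ℝ} {n : ℕ} (hx : 0 ≤ x) (hk : 0 < k)
    (hn : 0 < n) (h : n * x ^ k ≤ 1) : x ≤ ((n : ℝ) ^ k⁻¹)⁻¹ := by
  have hn' : (0 : ℝ) < n := Nat.cast_pos.mpr hn
  rw [← Real.inv_rpow hn'.le, Real.le_rpow_inv_iff_of_pos hx (inv_nonneg.mpr hn'.le) hk,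
    ← one_div, le_div_iff₀ hn', mul_comm]
  exact h

theorem summable_of_eventually_natCast_mul_rpow_le_one {γ : ℕ → ℝ} {k : ℝ} (hk : k ∈ Ioo (0 : ℝ) 1)
    (hγ : ∀ n, 0 ≤ γ n) (h : ∀ᶠ n : ℕ in atTop, n * γ n ^ k ≤ 1) : Summable γ := by
  have hp : 1 < k⁻¹ := (one_lt_inv₀ hk.1).mpr hk.2
  refine Summable.of_norm_bounded_eventually_nat (Real.summable_nat_rpow_inv.mpr hp) ?_
  filter_upwards [h, eventually_gt_atTop 0] with n hn hn0
  rw [Real.norm_of_nonneg (hγ n)]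
  exact le_inv_natCast_rpow_inv_of_mul_rpow_le_one (hγ n) hk.1 hn0 hn

/-- If `F` satisfies (F2) and (F3) with constant `k ∈ (0,1)`, `τ > 0`,
and `(γₙ)` is a sequence of positive reals with `F (γ n) ≤ F (γ 0) - n·τ` for all `n ≥ 1`,
then the series `Σ γ n` converges. -/
theorem summable_gamma_of_F_decay
    (F : ℝ → ℝ) (k : ℝ) (hk : k ∈ Set.Ioo (0:ℝ) 1)
    -- (F2)
    (hF2 : ∀ α : ℕ → ℝ, (∀ n, 0 < α n) →
      (Tendsto α atTop (nhds 0) ↔ Tendsto (fun n => F (α n)) atTop atBot))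
    -- (F3) with constant k
    (hF3 : Tendsto (fun α : ℝ => α ^ k * F α) (nhdsWithin 0 (Set.Ioi 0)) (nhds 0))
    (τ : ℝ) (hτ : 0 < τ)
    (γ : ℕ → ℝ) (hγ_pos : ∀ n, 0 < γ n)
    (hdecay : ∀ n : ℕ, 1 ≤ n → F (γ n) ≤ F (γ 0) - n * τ) :
    Summable γ := by
  have hdecay' : ∀ᶠ n in atTop, F (γ n) ≤ F (γ 0) - n * τ := eventually_atTop.mpr ⟨1, hdecay⟩
  have hγ_zero : Tendsto γ atTop (𝓝[>] 0) :=
    tendsto_nhdsWithin_iff.mpr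
      ⟨(hF2 γ hγ_pos).mpr (tendsto_atBot_of_le_const_sub_natCast_mul hτ hdecay'),
        .of_forall hγ_pos⟩
  have hlim := tendsto_natCast_mul_rpow_of_le_const_sub_natCast_mul hk.1 hτ hF3 hγ_zero hdecay'
  exact summable_of_eventually_natCast_mul_rpow_le_one hk (fun n => (hγ_pos n).le)
    (hlim.eventually (eventually_le_nhds one_pos))
end

section
/- Let F₁, F₂ : (0,∞) → ℝ satisfy Wardowski's conditions (F1)–(F3), suppose F₁(α) ≤ F₂(α) for all α > 0, and suppose the function G := F₂ − F₁ is nondecreasing on (0,∞). Then every F₁-contraction T : X → X on a metric space (X,d) with constant τ > 0 is also an F₂-contraction with the same constant τ. -/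
open Filter Set

/-- If `F₁, F₂` satisfy Wardowski's conditions (F1)–(F3), `F₁ ≤ F₂` on
`(0,∞)`, and `G := F₂ - F₁` is nondecreasing on `(0,∞)`, then every `F₁`-contraction
with constant `τ` is an `F₂`-contraction with the same constant `τ`. -/
theorem F1_contraction_is_F2_contraction
    {X : Type*} [MetricSpace X]
    (F₁ F₂ : ℝ → ℝ)
    -- Wardowski's conditions for F₁
    (hF₁1 : ∀ a b : ℝ, 0 < a → a < b → F₁ a < F₁ b)
    (hF₁2 : ∀ α : ℕ → ℝ, (∀ n, 0 < α n) →
      (Tendsto α atTop (nhds 0) ↔ Tendsto (fun n => F₁ (α n)) atTop atBot))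
    (hF₁3 : ∃ k ∈ Set.Ioo (0:ℝ) 1,
      Tendsto (fun α : ℝ => α ^ k * F₁ α) (nhdsWithin 0 (Set.Ioi 0)) (nhds 0))
    -- Wardowski's conditions for F₂
    (hF₂1 : ∀ a b : ℝ, 0 < a → a < b → F₂ a < F₂ b)
    (hF₂2 : ∀ α : ℕ → ℝ, (∀ n, 0 < α n) →
      (Tendsto α atTop (nhds 0) ↔ Tendsto (fun n => F₂ (α n)) atTop atBot))
    (hF₂3 : ∃ k ∈ Set.Ioo (0:ℝ) 1,
      Tendsto (fun α : ℝ => α ^ k * F₂ α) (nhdsWithin 0 (Set.Ioi 0)) (nhds 0))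
    -- F₁ ≤ F₂ on (0,∞)
    (hle : ∀ α : ℝ, 0 < α → F₁ α ≤ F₂ α)
    -- G = F₂ - F₁ is nondecreasing on (0,∞)
    (hG : ∀ a b : ℝ, 0 < a → a ≤ b → F₂ a - F₁ a ≤ F₂ b - F₁ b)
    (τ : ℝ) (hτ : 0 < τ)
    (T : X → X)
    -- T is an F₁-contraction with constant τ
    (hcontr : ∀ x y : X, 0 < dist (T x) (T y) →
      τ + F₁ (dist (T x) (T y)) ≤ F₁ (dist x y)) :
    -- T is an F₂-contraction with the same constant τ
    ∀ x y : X, 0 < dist (T x) (T y) →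
      τ + F₂ (dist (T x) (T y)) ≤ F₂ (dist x y) := by
  intro x y hd
  have h1 := hcontr x y hd
  have hdle : dist (T x) (T y) ≤ dist x y := by
    by_contra h
    push_neg at h
    have hxy0 : 0 < dist x y := by
      rcases lt_or_ge 0 (dist x y) with h' | h'
      · exact h'
      · have : dist x y = 0 := le_antisymm h' dist_nonneg
        have hxy : x = y := dist_eq_zero.mp this
        rw [hxy] at hd
        simp at hd
    have := hF₁1 _ _ hxy0 h
    linarith
  have hxy0 : 0 < dist x y := lt_of_lt_of_le hd hdle
  have h2 := hG _ _ hd hdle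
  linarith
end
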